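/- Let Γ be a finite simplicial graph with countable vertex groups {G_i}. Then the kernel K_Γ of G_Γ → ∏ G_i is a retract of the commutator subgroup [A_Γ, A_Γ] of the right-angled Artin group A_Γ on Γ, i.e., there exist homomorphisms ι : K_Γ → [A_Γ,A_Γ] and r : [A_Γ,A_Γ] → K_Γ with r∘ι = id. -/

import Mathlib

/-!
Set maps `f i : G i → G' i`, not necessarily homomorphisms, induce homomorphisms between the
kernels `K_Γ`. Reading a word from left to right and keeping track of the image `a` of the prefix
in `∏ G i`, replace each syllable `s ∈ G i` by `f(a i)⁻¹ f(a i * s) ∈ G' i`; this is the word map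
`phiWord`. Recording the output for every starting point `a` turns it into a homomorphism from
`G_Γ` into the unrestricted wreath product of `G'_Γ` by `∏ G i`, i.e. a cocycle, and on `K_Γ`
its value at `a = 1` is a homomorphism into `K'_Γ`, functorial in `f` as soon as `f i 1 = 1`.
Embedding each countable `G i` into `ℤ` with `1 ↦ 0` and taking a left inverse exhibits `K_Γ` as
a retract of the kernel for `A_Γ`, which is `[A_Γ, A_Γ]` because `ℤ` is abelian.
-/

open Monoid
open scoped commutatorElement

namespace GPaper

variable {ι : Type*}

/-- The relator subgroup of the graph product: normal closure of commutators of
elements of vertex groups at adjacent vertices. -/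
def Rels (Γ : SimpleGraph ι) (G : ι → Type*) [∀ i, Group (G i)] : Subgroup (Monoid.CoprodI G) :=
  Subgroup.normalClosure
    { x | ∃ (i j : ι) (g : G i) (h : G j), Γ.Adj i j ∧
          x = ⁅Monoid.CoprodI.of g, Monoid.CoprodI.of h⁆ }

instance (Γ : SimpleGraph ι) (G : ι → Type*) [∀ i, Group (G i)] : (Rels Γ G).Normal :=
  Subgroup.normalClosure_normal

/-- The graph product of the groups `G i` over the simplicial graph `Γ`. -/
abbrev GP (Γ : SimpleGraph ι) (G : ι → Type*) [∀ i, Group (G i)] :=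
  Monoid.CoprodI G ⧸ Rels Γ G

/-- The canonical inclusion of a vertex group into the graph product. -/
def of (Γ : SimpleGraph ι) (G : ι → Type*) [∀ i, Group (G i)] (i : ι) : G i →* GP Γ G :=
  (QuotientGroup.mk' (Rels Γ G)).comp Monoid.CoprodI.of

/-- The canonical homomorphism from the graph product to the direct product. -/
def proj [DecidableEq ι] (Γ : SimpleGraph ι) (G : ι → Type*) [∀ i, Group (G i)] :
    GP Γ G →* (∀ i, G i) :=
  QuotientGroup.lift (Rels Γ G) (Monoid.CoprodI.lift (fun i => MonoidHom.mulSingle G i)) (by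
    intro x hx
    refine Subgroup.normalClosure_le_normal ?_ hx
    rintro y ⟨i, j, g, h, hadj, rfl⟩
    have hij : i ≠ j := hadj.ne
    simp only [SetLike.mem_coe, MonoidHom.mem_ker, map_commutatorElement,
      Monoid.CoprodI.lift_of]
    rw [commutatorElement_eq_one_iff_commute]
    exact Pi.mulSingle_commute hij g h)

/-- The canonical epimorphism `G_Γ → G_Γ'` when `Γ'` is obtained from `Γ` by adding edges. -/
def mapGraph (Γ Γ' : SimpleGraph ι) (hΓ : Γ ≤ Γ') (G : ι → Type*) [∀ i, Group (G i)] :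
    GP Γ G →* GP Γ' G :=
  QuotientGroup.lift (Rels Γ G) (QuotientGroup.mk' (Rels Γ' G)) (by
    intro x hx
    rw [QuotientGroup.ker_mk']
    refine Subgroup.normalClosure_le_normal ?_ hx
    rintro y ⟨i, j, g, h, hadj, rfl⟩
    exact Subgroup.subset_normalClosure ⟨i, j, g, h, hΓ hadj, rfl⟩)

/-- The element of the graph product represented by a word (list of syllables). -/
def wordProd (Γ : SimpleGraph ι) (G : ι → Type*) [∀ i, Group (G i)]
    (w : List (Σ i, G i)) : GP Γ G :=
  (w.map fun s => of Γ G s.1 s.2).prod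

/-- The image of a word in the direct product of the vertex groups. -/
def piProd [DecidableEq ι] (G : ι → Type*) [∀ i, Group (G i)]
    (w : List (Σ i, G i)) : ∀ i, G i :=
  (w.map fun s => Pi.mulSingle s.1 s.2).prod

/-- The ordered product of those syllables of a word that belong to `G i`. -/
def sylProd [DecidableEq ι] (G : ι → Type*) [∀ i, Group (G i)]
    (w : List (Σ i, G i)) (i : ι) : G i :=
  (w.filterMap fun s => if h : s.1 = i then some (cast (congrArg G h) s.2) else none).prod

/-- The normal (syllable) length of an element of a graph product:
the minimal number of syllables in a word representing it. -/
noncomputable def nl (Γ : SimpleGraph ι) (G : ι → Type*) [∀ i, Group (G i)]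
    (g : GP Γ G) : ℕ :=
  sInf { n | ∃ w : List (Σ i, G i), wordProd Γ G w = g ∧ w.length = n }

section Phi

open scoped Classical

variable [DecidableEq ι] {G G' : ι → Type*} [∀ i, Group (G i)] [∀ i, Group (G' i)]

/-- One step of the recursive construction of `Φ`: the new syllable
`f(π(w))⁻¹ · f(π(w)s)` (dropped if trivial), where `g = π(w)`. -/
noncomputable def phiStep (f : ∀ i, G i → G' i) (g : ∀ i, G i) (s : Σ i, G i) : List (Σ i, G' i) :=
  if (f s.1 (g s.1))⁻¹ * f s.1 (g s.1 * s.2) = 1 then []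
  else [⟨s.1, (f s.1 (g s.1))⁻¹ * f s.1 (g s.1 * s.2)⟩]

/-- Auxiliary recursion: process the word left to right, carrying the
image `g` of the prefix in the direct product. -/
noncomputable def phiAux (f : ∀ i, G i → G' i) : (∀ i, G i) → List (Σ i, G i) → List (Σ i, G' i)
  | _, [] => []
  | g, s :: w => phiStep f g s ++ phiAux f (g * Pi.mulSingle s.1 s.2) w

/-- The word map `Φ : S* → S'*` induced by the set maps `f i : G i → G' i`. -/
noncomputable def phiWord (f : ∀ i, G i → G' i) (w : List (Σ i, G i)) : List (Σ i, G' i) :=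
  phiAux f 1 w

end Phi

section GraphProduct

variable {Γ : SimpleGraph ι} {G : ι → Type*} [∀ i, Group (G i)]

theorem of_commute {i j : ι} (h : Γ.Adj i j) (x : G i) (y : G j) :
    Commute (of Γ G i x) (of Γ G j y) := by
  rw [← commutatorElement_eq_one_iff_commute]
  change QuotientGroup.mk' (Rels Γ G) ⁅Monoid.CoprodI.of x, Monoid.CoprodI.of y⁆ = 1
  rw [QuotientGroup.mk'_apply, QuotientGroup.eq_one_iff]
  exact Subgroup.subset_normalClosure ⟨i, j, x, y, h, rfl⟩

def GP.lift {M : Type*} [Group M] (φ : ∀ i, G i →* M)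
    (hφ : ∀ i j, Γ.Adj i j → ∀ a b, Commute (φ i a) (φ j b)) : GP Γ G →* M :=
  QuotientGroup.lift (Rels Γ G) (Monoid.CoprodI.lift φ) (by
    refine Subgroup.normalClosure_le_normal ?_
    rintro _ ⟨i, j, a, b, hadj, rfl⟩
    rw [SetLike.mem_coe, MonoidHom.mem_ker, map_commutatorElement, Monoid.CoprodI.lift_of,
      Monoid.CoprodI.lift_of, commutatorElement_eq_one_iff_commute]
    exact hφ i j hadj a b)

@[simp] theorem GP.lift_of {M : Type*} [Group M] (φ : ∀ i, G i →* M)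
    (hφ : ∀ i j, Γ.Adj i j → ∀ a b, Commute (φ i a) (φ j b)) (i : ι) (a : G i) :
    GP.lift φ hφ (of Γ G i a) = φ i a :=
  Monoid.CoprodI.lift_of φ a

@[elab_as_elim]
theorem GP.induction_on {C : GP Γ G → Prop} (x : GP Γ G) (one : C 1)
    (of : ∀ i (a : G i), C (of Γ G i a)) (mul : ∀ x y, C x → C y → C (x * y)) : C x := by
  induction x using QuotientGroup.induction_on with
  | H y =>
    induction y using Monoid.CoprodI.induction_on with
    | one => exact one
    | of i a => exact of i a
    | mul y z hy hz => exact mul _ _ hy hz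

theorem GP.hom_ext {M : Type*} [Monoid M] {F₁ F₂ : GP Γ G →* M}
    (h : ∀ i, F₁.comp (of Γ G i) = F₂.comp (of Γ G i)) : F₁ = F₂ :=
  QuotientGroup.monoidHom_ext _ (Monoid.CoprodI.ext_hom _ _ h)

@[simp] theorem proj_of [DecidableEq ι] (i : ι) (a : G i) :
    proj Γ G (of Γ G i a) = Pi.mulSingle i a := by
  simp [proj, of]

end GraphProduct

section LeftDiff

variable {α β γ : Type*} [Group α] [Group β] [Group γ]

def leftDiff (f : α → β) (a s : α) : β := (f a)⁻¹ * f (a * s)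

theorem leftDiff_mul (f : α → β) (a s t : α) :
    leftDiff f a (s * t) = leftDiff f a s * leftDiff f (a * s) t := by
  simp only [leftDiff, mul_assoc, mul_inv_cancel_left]

@[simp] theorem leftDiff_one (f : α → β) (a : α) : leftDiff f a 1 = 1 := by
  simp [leftDiff]

@[simp] theorem leftDiff_id (a s : α) : leftDiff id a s = s := by
  simp [leftDiff]

theorem leftDiff_comp (f' : β → γ) (f : α → β) (a s : α) :
    leftDiff (f' ∘ f) a s = leftDiff f' (f a) (leftDiff f a s) := by
  simp [leftDiff]

end LeftDiff

def rightTranslate (P H : Type*) [Group P] [Group H] : P →* MulAut (P → H) where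
  toFun a :=
    { toFun := fun α g => α (g * a)
      invFun := fun α g => α (g * a⁻¹)
      left_inv := fun α => funext fun g => by simp
      right_inv := fun α => funext fun g => by simp
      map_mul' := fun _ _ => rfl }
  map_one' := MulEquiv.ext fun α => funext fun g => by simp
  map_mul' a b := MulEquiv.ext fun α => funext fun g => by simp [mul_assoc]

/-- Mathlib's `RegularWreathProduct` uses the left regular action; with the right one the cocycle
identity reads `c (x * y) g = c x g * c y (g * proj x)`, with no inverses. -/
abbrev RightWreathProduct (D Q : Type*) [Group D] [Group Q] := (Q → D) ⋊[rightTranslate Q D] Q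

namespace RightWreathProduct

variable {D Q : Type*} [Group D] [Group Q]

theorem mul_left_apply (a b : RightWreathProduct D Q) (g : Q) :
    (a * b).left g = a.left g * b.left (g * a.right) := rfl

@[simp] theorem one_left_apply (g : Q) : (1 : RightWreathProduct D Q).left g = 1 := rfl

end RightWreathProduct

section Cocycle

variable [DecidableEq ι] (Γ : SimpleGraph ι) {G G' G'' : ι → Type*} [∀ i, Group (G i)]
  [∀ i, Group (G' i)] [∀ i, Group (G'' i)]

def cocycleGen (f : ∀ i, G i → G' i) (i : ι) :
    G i →* RightWreathProduct (GP Γ G') (∀ i, G i) where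
  toFun s := ⟨fun g => of Γ G' i (leftDiff (f i) (g i) s), Pi.mulSingle i s⟩
  map_one' := by ext <;> simp
  map_mul' s t := by
    refine SemidirectProduct.ext (funext fun g => ?_) (Pi.mulSingle_mul i s t)
    simp [RightWreathProduct.mul_left_apply, leftDiff_mul]

theorem cocycleGen_commute (f : ∀ i, G i → G' i) {i j : ι} (h : Γ.Adj i j)
    (a : G i) (b : G j) :
    Commute (cocycleGen Γ f i a) (cocycleGen Γ f j b) := by
  refine SemidirectProduct.ext (funext fun g => ?_) (Pi.mulSingle_commute h.ne a b).eq
  simp [RightWreathProduct.mul_left_apply, cocycleGen, Pi.mulSingle_eq_of_ne h.ne,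
    Pi.mulSingle_eq_of_ne h.ne.symm, (of_commute h _ _).eq]


def cocycle (f : ∀ i, G i → G' i) : GP Γ G →* RightWreathProduct (GP Γ G') (∀ i, G i) :=
  GP.lift (cocycleGen Γ f) fun _ _ h => cocycleGen_commute Γ f h

variable {Γ}

@[simp] theorem cocycle_of (f : ∀ i, G i → G' i) (i : ι) (s : G i) (g : ∀ i, G i) :
    (cocycle Γ f (of Γ G i s)).left g = of Γ G' i (leftDiff (f i) (g i) s) := by
  simp [cocycle, cocycleGen]

@[simp] theorem cocycle_right (f : ∀ i, G i → G' i) (x : GP Γ G) :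
    (cocycle Γ f x).right = proj Γ G x := by
  suffices SemidirectProduct.rightHom.comp (cocycle Γ f) = proj Γ G from DFunLike.congr_fun this x
  exact GP.hom_ext fun i => MonoidHom.ext fun s => by simp [cocycle, cocycleGen]

theorem cocycle_mul (f : ∀ i, G i → G' i) (x y : GP Γ G) (g : ∀ i, G i) :
    (cocycle Γ f (x * y)).left g
      = (cocycle Γ f x).left g * (cocycle Γ f y).left (g * proj Γ G x) := by
  rw [map_mul, RightWreathProduct.mul_left_apply, cocycle_right]

theorem proj_cocycle (f : ∀ i, G i → G' i) (x : GP Γ G) (g : ∀ i, G i) :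
    proj Γ G' ((cocycle Γ f x).left g) = fun i => leftDiff (f i) (g i) (proj Γ G x i) := by
  induction x using GP.induction_on generalizing g with
  | one => funext i; simp
  | of i s =>
    funext j
    simp only [cocycle_of, proj_of]
    exact (Pi.apply_mulSingle (fun j => leftDiff (f j) (g j)) (fun _ => leftDiff_one _ _)
      i s j).symm
  | mul x y hx hy =>
    rw [cocycle_mul, map_mul, hx, hy]
    funext i
    simp [leftDiff_mul]

theorem cocycle_id (x : GP Γ G) (g : ∀ i, G i) : (cocycle Γ (fun _ => id) x).left g = x := by
  induction x using GP.induction_on generalizing g with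
  | one => rfl
  | of i s => simp
  | mul x y hx hy => rw [cocycle_mul, hx, hy]

theorem cocycle_comp (f' : ∀ i, G' i → G'' i) (f : ∀ i, G i → G' i) (x : GP Γ G)
    (g : ∀ i, G i) :
    (cocycle Γ (fun i => f' i ∘ f i) x).left g
      = (cocycle Γ f' ((cocycle Γ f x).left g)).left (fun i => f i (g i)) := by
  induction x using GP.induction_on generalizing g with
  | one => simp
  | of i s => simp [leftDiff_comp]
  | mul x y hx hy =>
    have hshift : (fun i => f i (g i)) * proj Γ G' ((cocycle Γ f x).left g)
        = fun i => f i ((g * proj Γ G x) i) := by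
      funext i
      simp [proj_cocycle, leftDiff]
    rw [cocycle_mul, cocycle_mul, map_mul, RightWreathProduct.mul_left_apply, cocycle_right,
      hshift, hx, hy]

end Cocycle

section KerMap

variable [DecidableEq ι] {Γ : SimpleGraph ι} {G G' G'' : ι → Type*} [∀ i, Group (G i)]
  [∀ i, Group (G' i)] [∀ i, Group (G'' i)]

def kerMap (f : ∀ i, G i → G' i) : (proj Γ G).ker →* (proj Γ G').ker where
  toFun k := ⟨(cocycle Γ f k).left 1, by
    rw [MonoidHom.mem_ker, proj_cocycle, MonoidHom.mem_ker.mp k.2]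
    funext i
    simp⟩
  map_one' := rfl
  map_mul' k₁ k₂ := Subtype.ext <| by
    simp [MonoidHom.mem_ker.mp k₁.2]

@[simp] theorem coe_kerMap (f : ∀ i, G i → G' i) (k : (proj Γ G).ker) :
    (kerMap f k : GP Γ G') = (cocycle Γ f k).left 1 := rfl

theorem kerMap_id : kerMap (Γ := Γ) (fun i => (id : G i → G i)) = MonoidHom.id _ :=
  MonoidHom.ext fun k => Subtype.ext (cocycle_id (k : GP Γ G) 1)

theorem kerMap_comp (f' : ∀ i, G' i → G'' i) (f : ∀ i, G i → G' i) (hf : ∀ i, f i 1 = 1) :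
    (kerMap (Γ := Γ) f').comp (kerMap f) = kerMap fun i => f' i ∘ f i := by
  refine MonoidHom.ext fun k => Subtype.ext ?_
  have h1 : (fun i => f i 1) = 1 := funext hf
  simp [cocycle_comp, h1]

end KerMap

theorem kerMap_comp_eq_id_of_leftInverse [DecidableEq ι] {Γ : SimpleGraph ι}
    {G G' : ι → Type*} [∀ i, Group (G i)] [∀ i, Group (G' i)]
    (f : ∀ i, G i → G' i) (h : ∀ i, G' i → G i)
    (hf : ∀ i, f i 1 = 1) (hhf : ∀ i, Function.LeftInverse (h i) (f i)) :
    (kerMap (Γ := Γ) h).comp (kerMap f) = MonoidHom.id _ := by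
  rw [kerMap_comp h f hf, ← kerMap_id]
  exact congrArg kerMap (funext fun i => (hhf i).comp_eq_id)

theorem exists_injective_int_apply_eq_zero {α : Type*} [Countable α] (a : α) :
    ∃ e : α → ℤ, Function.Injective e ∧ e a = 0 := by
  obtain ⟨e, he⟩ := Countable.exists_injective_nat α
  exact ⟨fun x => e x - e a, fun x y hxy => he (by simpa using hxy), sub_self _⟩

theorem ker_proj_eq_commutator [DecidableEq ι] [Fintype ι] (Γ : SimpleGraph ι)
    (G : ι → Type*) [∀ i, CommGroup (G i)] :
    (proj Γ G).ker = commutator (GP Γ G) := by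
  refine le_antisymm ?_ (Abelianization.commutator_subset_ker _)
  let u : (∀ i, G i) →* Abelianization (GP Γ G) :=
    MonoidHom.noncommPiCoprod (fun i => Abelianization.of.comp (of Γ G i))
      fun _ _ _ _ _ => Commute.all _ _
  have hu : u.comp (proj Γ G) = Abelianization.of := by
    refine GP.hom_ext fun i => MonoidHom.ext fun a => ?_
    change u (proj Γ G (of Γ G i a)) = _
    rw [proj_of]
    exact MonoidHom.noncommPiCoprod_mulSingle _ i a
  rw [← Abelianization.ker_of, ← hu]
  exact (proj Γ G).ker_le_comap u.ker

/-- If each vertex group is countable, the kernel `K_Γ` is a retract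
of the commutator subgroup of the right-angled Artin group on `Γ`. -/
theorem stmt11 {ι : Type*} [DecidableEq ι] [Fintype ι] (Γ : SimpleGraph ι)
    (G : ι → Type*) [∀ i, Group (G i)] [∀ i, Countable (G i)] :
    ∃ (j : (proj Γ G).ker →* commutator (GP Γ (fun _ : ι => Multiplicative ℤ)))
      (r : (commutator (GP Γ (fun _ : ι => Multiplicative ℤ)) : Subgroup _) →* (proj Γ G).ker),
      r.comp j = MonoidHom.id _ := by
  choose e he he1 using fun i => exists_injective_int_apply_eq_zero (1 : G i)
  let f i : G i → Multiplicative ℤ := Multiplicative.ofAdd ∘ e i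
  have hf : ∀ i, Function.Injective (f i) := fun i => Multiplicative.ofAdd.injective.comp (he i)
  let c := MulEquiv.subgroupCongr (ker_proj_eq_commutator Γ fun _ => Multiplicative ℤ)
  refine ⟨c.toMonoidHom.comp (kerMap f), (kerMap fun i => Function.invFun (f i)).comp
    c.symm.toMonoidHom, MonoidHom.ext fun k => ?_⟩
  have hretract := kerMap_comp_eq_id_of_leftInverse (Γ := Γ) f _
    (fun i => congrArg Multiplicative.ofAdd (he1 i)) fun i => Function.leftInverse_invFun (hf i)
  simpa using DFunLike.congr_fun hretract k

end GPaper
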